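/- arXiv:1812.00274 — 3 statements merged into one kernel-verified Lean document; each statement's English description precedes it below -/
import Mathlib

section
/- For every n ≥ 2, the sequences (γ_r(G_n))_{r ∈ ℕ} and (ν_r(G_n))_{r ∈ ℕ} are nonincreasing and both converge to the kissing number κ_n as r → ∞. -/
noncomputable section

open Filter Topology RealInnerProductSpace

/-- The unit sphere `S^{n-1}` in `ℝ^n`. -/
abbrev Sphere (n : ℕ) : Set (EuclideanSpace ℝ (Fin n)) :=
  Metric.sphere (0 : EuclideanSpace ℝ (Fin n)) 1

/-- The `r`-stack of a `d`-tensor `T`: `Stk^r(T)(u, w) = T(u)`. -/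
def stk {α : Type*} (d r : ℕ) (T : (Fin d → α) → ℝ) : (Fin (d + r) → α) → ℝ :=
  fun v => T fun i => v (Fin.castAdd r i)

/-- The symmetrization of a `d`-tensor:
`σ(T)(v) = (1/d!) ∑_{π ∈ Sym(d)} T(v ∘ π)`. -/
def tsym {α : Type*} (d : ℕ) (T : (Fin d → α) → ℝ) : (Fin d → α) → ℝ :=
  fun v => (d.factorial : ℝ)⁻¹ * ∑ π : Equiv.Perm (Fin d), T (v ∘ π)

/-- A symmetric two-variable function identified with a `2`-tensor. -/
def kerTensor {X : Type*} (K : X → X → ℝ) : (Fin 2 → X) → ℝ :=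
  fun v => K (v 0) (v 1)

/-- A kernel: a continuous symmetric real-valued function of two variables. -/
def IsKernel {X : Type*} [TopologicalSpace X] (K : X → X → ℝ) : Prop :=
  Continuous (fun p : X × X => K p.1 p.2) ∧ ∀ x y, K x y = K y x

/-- Positive semidefiniteness of a two-variable function. -/
def IsPSDKernel {X : Type*} (K : X → X → ℝ) : Prop :=
  ∀ (k : ℕ) (v : Fin k → X) (x : Fin k → ℝ),
    0 ≤ ∑ i, ∑ j, K (v i) (v j) * x i * x j

/-- Copositivity of a two-variable function. -/
def IsCopositiveKernel {X : Type*} (K : X → X → ℝ) : Prop :=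
  ∀ (k : ℕ) (v : Fin k → X) (x : Fin k → ℝ), (∀ i, 0 ≤ x i) →
    0 ≤ ∑ i, ∑ j, K (v i) (v j) * x i * x j

/-- An `(r+2)`-tensor `S` is 2-PSD if it is continuous and every slice
`(x, y) ↦ S(x, y, z)` is a PSD kernel. -/
def Is2PSD {X : Type*} [TopologicalSpace X] (r : ℕ)
    (S : (Fin (2 + r) → X) → ℝ) : Prop :=
  Continuous S ∧ ∀ z : Fin r → X, IsPSDKernel fun x y => S (Fin.append ![x, y] z)

/-- Membership in `C_r`: a kernel `M` with `σ(Stk^r M) = σ(N)` for some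
nonnegative `(r+2)`-tensor `N`. -/
def memCr {X : Type*} [TopologicalSpace X] (r : ℕ) (M : X → X → ℝ) : Prop :=
  IsKernel M ∧ ∃ N : (Fin (2 + r) → X) → ℝ, (∀ v, 0 ≤ N v) ∧
    tsym (2 + r) (stk 2 r (kerTensor M)) = tsym (2 + r) N

/-- Membership in `Q_r`: a kernel `M` with `σ(Stk^r M) = σ(N) + σ(S)` for some
nonnegative `(r+2)`-tensor `N` and 2-PSD `(r+2)`-tensor `S`. -/
def memQr {X : Type*} [TopologicalSpace X] (r : ℕ) (M : X → X → ℝ) : Prop :=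
  IsKernel M ∧ ∃ N S : (Fin (2 + r) → X) → ℝ, (∀ v, 0 ≤ N v) ∧ Is2PSD r S ∧
    tsym (2 + r) (stk 2 r (kerTensor M)) =
      fun v => tsym (2 + r) N v + tsym (2 + r) S v

/-- The kissing number `κ_n = α(G_n)`: the maximum cardinality of a finite set
of points on `S^{n-1}` with pairwise inner products at most `1/2`. -/
def kissingNumber (n : ℕ) : ℕ :=
  sSup {k : ℕ | ∃ X : Finset ↥(Sphere n),
    (∀ u ∈ X, ∀ v ∈ X, u ≠ v →
      ⟪(u : EuclideanSpace ℝ (Fin n)), (v : EuclideanSpace ℝ (Fin n))⟫ ≤ 1 / 2) ∧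
    X.card = k}

/-- `γ_r(G_n) ∈ ℝ ∪ {+∞}`: the infimum of `λ ∈ ℝ` over pairs `(K, λ)` with
`K ∈ C_r^{S^{n-1}}`, `K(v,v) = λ - 1` for all `v`, and `K(u,v) = -1` whenever
`⟪u,v⟫ ≤ 1/2`. -/
def gammaSph (n r : ℕ) : EReal :=
  sInf {x : EReal | ∃ l : ℝ, x = (l : EReal) ∧
    ∃ K : ↥(Sphere n) → ↥(Sphere n) → ℝ, memCr r K ∧
      (∀ v, K v v = l - 1) ∧
      ∀ u v : ↥(Sphere n),
        ⟪(u : EuclideanSpace ℝ (Fin n)), (v : EuclideanSpace ℝ (Fin n))⟫ ≤ 1 / 2 →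
        K u v = -1}

/-- `ν_r(G_n) ∈ ℝ ∪ {+∞}`: as `γ_r(G_n)` with `Q_r^{S^{n-1}}` in place of
`C_r^{S^{n-1}}`. -/
def nuSph (n r : ℕ) : EReal :=
  sInf {x : EReal | ∃ l : ℝ, x = (l : EReal) ∧
    ∃ K : ↥(Sphere n) → ↥(Sphere n) → ℝ, memQr r K ∧
      (∀ v, K v v = l - 1) ∧
      ∀ u v : ↥(Sphere n),
        ⟪(u : EuclideanSpace ℝ (Fin n)), (v : EuclideanSpace ℝ (Fin n))⟫ ≤ 1 / 2 →
        K u v = -1}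

/-!
Monotonicity: `σ(Stk(σ T)) = σ(Stk T)`, so stacking one more coordinate onto a certificate
`σ(Stk^r M) = σ(N) (+ σ(S))` gives a certificate for `r + 1`.

Lower bound: evaluating the certificate identity on all `(r+2)`-tuples of points of an optimal
kissing configuration and summing, the left side is `κ^(r+1) (λ - κ)` and the right side is
nonnegative, so `κ ≤ λ`.

Upper bound: by compactness there is `t > 1/2` such that any `κ + 1` points of the sphere contain
two with inner product `≥ t`. For `λ > κ` put `K(u,v) = λ f(⟨u,v⟩) - 1` with `f` continuous,
`0` on `(-∞, 1/2]` and `1` on `[t, ∞)`. For `m` points, the complement of the graph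
"inner product `≥ t`" has no `(κ+1)`-clique, so by Turán's theorem the graph has at least
`m²/κ - m` ordered edges and `∑_{i ≠ j} K(w_i, w_j) ≥ 0` once `m ≥ κλ/(λ - κ)`. Then
`σ(Stk^r K)` is itself a nonnegative certificate for `K ∈ C_r`.
-/

open Finset

section Symmetrization

variable {α : Type*}

theorem tsym_precomp_perm (d : ℕ) (T : (Fin d → α) → ℝ) (ρ : Equiv.Perm (Fin d)) :
    tsym d (fun v => T (v ∘ ρ)) = tsym d T := by
  funext v
  unfold tsym
  congr 1
  exact Equiv.sum_comp (Equiv.mulRight ρ) fun π => T (v ∘ π)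

theorem tsym_comp_perm (d : ℕ) (T : (Fin d → α) → ℝ) (v : Fin d → α)
    (ρ : Equiv.Perm (Fin d)) : tsym d T (v ∘ ρ) = tsym d T v := by
  unfold tsym
  congr 1
  exact Equiv.sum_comp (Equiv.mulLeft ρ) fun π => T (v ∘ π)

theorem tsym_tsym (d : ℕ) (T : (Fin d → α) → ℝ) : tsym d (tsym d T) = tsym d T := by
  funext v
  rw [tsym]
  simp only [tsym_comp_perm, sum_const, card_univ, Fintype.card_perm, Fintype.card_fin,
    nsmul_eq_mul]
  field_simp

theorem tsym_add (d : ℕ) (T S : (Fin d → α) → ℝ) :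
    tsym d (T + S) = tsym d T + tsym d S := by
  funext v
  simp only [tsym, Pi.add_apply, sum_add_distrib, mul_add]

def Equiv.Perm.castAddExtend {d : ℕ} (r : ℕ) (ρ : Equiv.Perm (Fin d)) :
    Equiv.Perm (Fin (d + r)) :=
  finSumFinEquiv.permCongr (ρ.sumCongr 1)

theorem Equiv.Perm.castAddExtend_castAdd {d : ℕ} (r : ℕ) (ρ : Equiv.Perm (Fin d)) (i : Fin d) :
    ρ.castAddExtend r (Fin.castAdd r i) = Fin.castAdd r (ρ i) := by
  simp [Equiv.Perm.castAddExtend]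

theorem tsym_stk_tsym (d r : ℕ) (T : (Fin d → α) → ℝ) :
    tsym (d + r) (stk d r (tsym d T)) = tsym (d + r) (stk d r T) := by
  have hperm (ρ : Equiv.Perm (Fin d)) :
      tsym (d + r) (fun w => T (fun i => w (Fin.castAdd r (ρ i)))) = tsym (d + r) (stk d r T) := by
    rw [← tsym_precomp_perm _ (stk d r T) (ρ.castAddExtend r)]
    simp only [stk, Function.comp_apply, Equiv.Perm.castAddExtend_castAdd]
  funext v
  calc tsym (d + r) (stk d r (tsym d T)) v
      = (d.factorial : ℝ)⁻¹ * ∑ ρ : Equiv.Perm (Fin d),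
          tsym (d + r) (fun w => T (fun i => w (Fin.castAdd r (ρ i)))) v := by
        simp only [tsym, stk, mul_sum]
        rw [sum_comm]
        ring_nf
        rfl
    _ = tsym (d + r) (stk d r T) v := by
        simp only [hperm, sum_const, card_univ, Fintype.card_perm, Fintype.card_fin, nsmul_eq_mul]
        field_simp

end Symmetrization

section Hierarchy

variable {X : Type*} {r : ℕ}

theorem tsym_stk_succ_eq (T : (Fin 2 → X) → ℝ) :
    tsym (2 + (r + 1)) (stk 2 (r + 1) T) =
      tsym (2 + r + 1) (stk (2 + r) 1 (tsym (2 + r) (stk 2 r T))) :=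
  (tsym_stk_tsym (2 + r) 1 (stk 2 r T)).symm

variable [TopologicalSpace X] {K : X → X → ℝ}

theorem memCr.succ (h : memCr r K) : memCr (r + 1) K := by
  obtain ⟨hK, N, hN, hsym⟩ := h
  refine ⟨hK, stk (2 + r) 1 N, fun v => hN _, ?_⟩
  rw [tsym_stk_succ_eq, hsym, tsym_stk_tsym]
  rfl

theorem Is2PSD.stk_one {S : (Fin (2 + r) → X) → ℝ} (hS : Is2PSD r S) :
    Is2PSD (r + 1) (stk (2 + r) 1 S) := by
  refine ⟨hS.1.comp (continuous_pi fun i => continuous_apply _), fun z => ?_⟩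
  convert hS.2 (fun i => z (Fin.castAdd 1 i)) using 3 with x y
  refine congrArg S (funext fun j => Fin.addCases (fun a => ?_) (fun b => ?_) j)
  · rw [show Fin.castAdd 1 (Fin.castAdd r a) = Fin.castAdd (r + 1) a from Fin.ext rfl,
      Fin.append_left, Fin.append_left]
  · rw [show Fin.castAdd 1 (Fin.natAdd 2 b) = Fin.natAdd 2 (Fin.castAdd 1 b) from Fin.ext rfl,
      Fin.append_right, Fin.append_right]

theorem memQr.succ (h : memQr r K) : memQr (r + 1) K := by
  obtain ⟨hK, N, S, hN, hS, hsym⟩ := h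
  refine ⟨hK, stk (2 + r) 1 N, stk (2 + r) 1 S, fun v => hN _, hS.stk_one, ?_⟩
  calc tsym (2 + (r + 1)) (stk 2 (r + 1) (kerTensor K))
      = tsym (2 + r + 1) (stk (2 + r) 1 (tsym (2 + r) N + tsym (2 + r) S)) := by
        rw [tsym_stk_succ_eq, hsym]
        rfl
    _ = tsym (2 + r + 1) (stk (2 + r) 1 N) + tsym (2 + r + 1) (stk (2 + r) 1 S) := by
        rw [← tsym_stk_tsym (2 + r) 1 N, ← tsym_stk_tsym (2 + r) 1 S]
        exact tsym_add _ _ _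

theorem memCr.memQr (h : memCr r K) : memQr r K := by
  obtain ⟨hK, N, hN, hsym⟩ := h
  refine ⟨hK, N, 0, hN, ⟨continuous_const, fun _ _ _ _ => by simp⟩, ?_⟩
  rw [hsym]
  funext v
  simp [tsym]

end Hierarchy

section LowerBound

variable {α ι : Type*} [Fintype ι]

theorem sum_tsym_comp (d : ℕ) (T : (Fin d → α) → ℝ) (c : ι → α) :
    ∑ f : Fin d → ι, tsym d T (c ∘ f) = ∑ f : Fin d → ι, T (c ∘ f) := by
  have hperm (π : Equiv.Perm (Fin d)) :
      ∑ f : Fin d → ι, T ((c ∘ f) ∘ π) = ∑ f : Fin d → ι, T (c ∘ f) :=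
    Equiv.sum_comp (Equiv.piCongrLeft' (fun _ => ι) π.symm) fun f => T (c ∘ f)
  simp only [tsym, ← mul_sum]
  rw [sum_comm]
  simp only [hperm, sum_const, card_univ, Fintype.card_perm, Fintype.card_fin, nsmul_eq_mul]
  field_simp

theorem sum_comp_two_add (r : ℕ) (G : (Fin (2 + r) → α) → ℝ) (c : ι → α) :
    ∑ f : Fin (2 + r) → ι, G (c ∘ f) =
      ∑ b : Fin r → ι, ∑ i, ∑ j, G (Fin.append ![c i, c j] (c ∘ b)) := by
  rw [← (Fin.appendEquiv 2 r).sum_comp, Fintype.sum_prod_type, sum_comm]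
  refine sum_congr rfl fun b _ => ?_
  rw [← (finTwoArrowEquiv ι).symm.sum_comp, Fintype.sum_prod_type]
  refine sum_congr rfl fun i _ => sum_congr rfl fun j _ => congrArg G ?_
  funext k
  refine Fin.addCases (fun a => ?_) (fun b => ?_) k
  · fin_cases a <;> simp [Fin.appendEquiv]
  · simp [Fin.appendEquiv]

theorem IsPSDKernel.sum_nonneg {K : α → α → ℝ} (hK : IsPSDKernel K) (c : ι → α) :
    0 ≤ ∑ i, ∑ j, K (c i) (c j) := by
  let e := (Fintype.equivFin ι).symm
  simpa [← e.sum_comp] using hK (Fintype.card ι) (c ∘ e) fun _ => 1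

variable [TopologicalSpace α] {r : ℕ} {K : α → α → ℝ}

theorem memQr.card_le (hK : memQr r K) [Nonempty ι] (c : ι → α) {l : ℝ}
    (hdiag : ∀ i, K (c i) (c i) = l - 1) (hoff : ∀ i j, i ≠ j → K (c i) (c j) = -1) :
    (Fintype.card ι : ℝ) ≤ l := by
  classical
  obtain ⟨-, N, S, hN, hS, hsym⟩ := hK
  have hrow (i : ι) : ∑ j, K (c i) (c j) = l - Fintype.card ι := by
    have hentry : ∀ j, K (c i) (c j) = -1 + if i = j then l else 0 := by
      intro j
      split_ifs with h
      · rw [← h, hdiag]; ring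
      · rw [hoff i j h]; ring
    simp only [hentry, sum_add_distrib, sum_const, card_univ, nsmul_eq_mul, sum_ite_eq,
      mem_univ, if_true]
    ring
  have hstk : ∑ f : Fin (2 + r) → ι, stk 2 r (kerTensor K) (c ∘ f) =
      Fintype.card ι ^ r * (Fintype.card ι * (l - Fintype.card ι)) := by
    rw [sum_comp_two_add]
    simp only [stk, kerTensor, Fin.append_left, Matrix.cons_val_zero, Matrix.cons_val_one,
      hrow, sum_sub_distrib, sum_const, card_univ, nsmul_eq_mul, Fintype.card_pi, prod_const,
      Fintype.card_fin, Nat.cast_pow]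
    ring
  have hN' : 0 ≤ ∑ f : Fin (2 + r) → ι, N (c ∘ f) := sum_nonneg fun f _ => hN _
  have hS' : 0 ≤ ∑ f : Fin (2 + r) → ι, S (c ∘ f) := by
    rw [sum_comp_two_add]
    exact sum_nonneg fun b _ => (hS.2 (c ∘ b)).sum_nonneg c
  have hsum := congrArg (fun F => ∑ f : Fin (2 + r) → ι, F (c ∘ f)) hsym
  simp only [sum_add_distrib, sum_tsym_comp, hstk] at hsum
  have hpos : (0 : ℝ) < Fintype.card ι ^ r * Fintype.card ι := by
    have : 0 < Fintype.card ι := Fintype.card_pos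
    positivity
  rw [← mul_assoc] at hsum
  exact sub_nonneg.1 ((mul_nonneg_iff_of_pos_left hpos).1 (by linarith))

end LowerBound

section OffDiagonalCriterion

theorem sum_perm_pair_eq {ι β : Type*} [Fintype ι] [DecidableEq ι] [AddCommMonoid β]
    (g : ι → ι → β) {a b c d : ι} (hab : a ≠ b) (hcd : c ≠ d) :
    ∑ π : Equiv.Perm ι, g (π a) (π b) = ∑ π : Equiv.Perm ι, g (π c) (π d) := by
  obtain ⟨ρ, hρc, hρd⟩ := MulAction.is_two_pretransitive_iff.1
    (Equiv.Perm.isMultiplyPretransitive ι 2) hcd hab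
  rw [← hρc, ← hρd]
  exact Equiv.sum_comp (Equiv.mulRight ρ) fun π : Equiv.Perm ι => g (π c) (π d)

theorem sum_perm_pair_nonneg {ι : Type*} [Fintype ι] [DecidableEq ι] (g : ι → ι → ℝ)
    (hg : ∀ π : Equiv.Perm ι, 0 ≤ ∑ p ∈ univ.offDiag, g (π p.1) (π p.2))
    {a b : ι} (hab : a ≠ b) : 0 ≤ ∑ π : Equiv.Perm ι, g (π a) (π b) := by
  have hmem : (a, b) ∈ (univ.offDiag : Finset (ι × ι)) := by simpa using hab
  have hcount : (#(univ.offDiag : Finset (ι × ι)) : ℝ) * ∑ π : Equiv.Perm ι, g (π a) (π b) =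
      ∑ π : Equiv.Perm ι, ∑ p ∈ univ.offDiag, g (π p.1) (π p.2) := by
    rw [sum_comm, ← nsmul_eq_mul, ← sum_const]
    exact sum_congr rfl fun p hp => sum_perm_pair_eq g hab (mem_offDiag.1 hp).2.2
  have hpos : (0 : ℝ) < #(univ.offDiag : Finset (ι × ι)) := by
    exact_mod_cast card_pos.2 ⟨_, hmem⟩
  exact (mul_nonneg_iff_of_pos_left hpos).1 (hcount ▸ sum_nonneg fun π _ => hg π)

variable {X : Type*} [TopologicalSpace X] {r : ℕ} {K : X → X → ℝ}

theorem memCr_of_sum_offDiag_nonneg (hK : IsKernel K)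
    (h : ∀ w : Fin (2 + r) → X, 0 ≤ ∑ p ∈ univ.offDiag, K (w p.1) (w p.2)) : memCr r K := by
  refine ⟨hK, tsym (2 + r) (stk 2 r (kerTensor K)), fun v => ?_, (tsym_tsym _ _).symm⟩
  have hne : Fin.castAdd r (0 : Fin 2) ≠ Fin.castAdd r 1 := by simp
  exact mul_nonneg (by positivity)
    (sum_perm_pair_nonneg (fun i j => K (v i) (v j)) (fun π => h (v ∘ π)) hne)

end OffDiagonalCriterion

namespace SimpleGraph

variable {V : Type*} [Fintype V] {G : SimpleGraph V} [DecidableRel G.Adj] {k : ℕ}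

theorem CliqueFree.mul_card_edgeFinset_le (h : G.CliqueFree (k + 1)) :
    2 * k * #G.edgeFinset ≤ (k - 1) * Fintype.card V ^ 2 :=
  (Nat.mul_le_mul_left _ (h.card_edgeFinset_le.trans_eq card_edgeFinset_turanGraph.symm)).trans
    mul_card_edgeFinset_turanGraph_le

theorem sq_card_le_of_cliqueFree_compl (hk : 0 < k)
    (h : Gᶜ.CliqueFree (k + 1)) :
    Fintype.card V ^ 2 ≤ k * (2 * #G.edgeFinset + Fintype.card V) := by
  classical
  have hdeg (v : V) : G.degree v + Gᶜ.degree v + 1 = Fintype.card V := by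
    have := G.degree_lt_card_verts v
    rw [degree_compl]
    omega
  have hsum : 2 * #G.edgeFinset + 2 * #Gᶜ.edgeFinset + Fintype.card V = Fintype.card V ^ 2 := by
    have := sum_congr rfl fun v (_ : v ∈ univ) => hdeg v
    simp only [sum_add_distrib, sum_const, card_univ, smul_eq_mul, mul_one] at this
    rw [← sum_degrees_eq_twice_card_edges, ← sum_degrees_eq_twice_card_edges, sq, this]
  have hturan := h.mul_card_edgeFinset_le
  obtain ⟨j, rfl⟩ : ∃ j, k = j + 1 := ⟨k - 1, by omega⟩
  rw [Nat.add_sub_cancel] at hturan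
  nlinarith

end SimpleGraph

section UpperBound

variable {X : Type*} {s : X → X → ℝ} {f : ℝ → ℝ} {t l : ℝ} {k : ℕ}

theorem sq_le_mul_sum_offDiag (hs : ∀ x y, s x y = s y x) (hf0 : ∀ x, 0 ≤ f x)
    (hf1 : ∀ x, t ≤ x → 1 ≤ f x) (hk : 0 < k)
    (hclose : ∀ q : Fin (k + 1) → X, ∃ i j, i ≠ j ∧ t ≤ s (q i) (q j))
    {m : ℕ} (w : Fin m → X) :
    (m : ℝ) ^ 2 ≤ k * (∑ p ∈ univ.offDiag, f (s (w p.1) (w p.2)) + m) := by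
  classical
  let G := SimpleGraph.fromRel fun i j : Fin m => t ≤ s (w i) (w j)
  have hG (i j : Fin m) (hij : G.Adj i j) : 1 ≤ f (s (w i) (w j)) := by
    obtain ⟨-, h | h⟩ := hij
    · exact hf1 _ h
    · exact hf1 _ (hs (w i) (w j) ▸ h)
  have hfree : Gᶜ.CliqueFree (k + 1) := by
    refine SimpleGraph.cliqueFree_iff.2 ⟨fun e => ?_⟩
    obtain ⟨i, j, hij, hclose⟩ := hclose (w ∘ e)
    have hadj := e.toHom.map_adj ((SimpleGraph.top_adj _ _).2 hij)
    exact (SimpleGraph.compl_adj _ _ _).1 hadj |>.2 ⟨hadj.ne, Or.inl hclose⟩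
  have hedges : (2 * #G.edgeFinset : ℝ) ≤ ∑ p ∈ univ.offDiag, f (s (w p.1) (w p.2)) := by
    let A := univ.filter fun p : Fin m × Fin m => G.Adj p.1 p.2
    have hsub : A ⊆ univ.offDiag := fun p hp => by simpa using (mem_filter.1 hp).2.ne
    calc (2 * #G.edgeFinset : ℝ) = #A := by exact_mod_cast G.two_mul_card_edgeFinset
      _ ≤ ∑ p ∈ A, f (s (w p.1) (w p.2)) := by
          simpa using card_nsmul_le_sum A _ 1 fun p hp => hG _ _ (mem_filter.1 hp).2
      _ ≤ ∑ p ∈ univ.offDiag, f (s (w p.1) (w p.2)) :=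
          sum_le_sum_of_subset_of_nonneg hsub fun _ _ _ => hf0 _
  have hturan := SimpleGraph.sq_card_le_of_cliqueFree_compl hk hfree
  rw [Fintype.card_fin] at hturan
  calc (m : ℝ) ^ 2 ≤ k * (2 * #G.edgeFinset + m) := by exact_mod_cast hturan
    _ ≤ k * (∑ p ∈ univ.offDiag, f (s (w p.1) (w p.2)) + m) := by gcongr

theorem card_offDiag_univ_fin (m : ℕ) :
    (#(univ.offDiag : Finset (Fin m × Fin m)) : ℝ) = m ^ 2 - m := by
  rw [offDiag_card, card_univ, Fintype.card_fin, Nat.cast_sub (Nat.le_mul_self m)]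
  push_cast
  ring

variable [TopologicalSpace X]

theorem eventually_memCr_ramp (hs : IsKernel s) (hf : Continuous f) (hf0 : ∀ x, 0 ≤ f x)
    (hf1 : ∀ x, t ≤ x → 1 ≤ f x) (hk : 0 < k)
    (hclose : ∀ q : Fin (k + 1) → X, ∃ i j, i ≠ j ∧ t ≤ s (q i) (q j)) (hl : k < l) :
    ∀ᶠ r in atTop, memCr r fun x y => l * f (s x y) - 1 := by
  have hK : IsKernel fun x y => l * f (s x y) - 1 :=
    ⟨(continuous_const.mul (hf.comp hs.1)).sub continuous_const, fun x y => by simp only [hs.2 x y]⟩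
  filter_upwards [eventually_ge_atTop ⌈k * l / (l - k)⌉₊] with r hr
  refine memCr_of_sum_offDiag_nonneg hK fun w => ?_
  have hm : k * l ≤ (l - k) * (2 + r : ℕ) := by
    rw [← div_le_iff₀' (by linarith)]
    refine (Nat.ceil_le.1 hr).trans ?_
    push_cast
    linarith
  have hsq := sq_le_mul_sum_offDiag hs.2 hf0 hf1 hk hclose w
  rw [sum_sub_distrib, ← mul_sum, sum_const, nsmul_one, card_offDiag_univ_fin]
  set F := ∑ p ∈ univ.offDiag, f (s (w p.1) (w p.2))
  set m : ℝ := ((2 + r : ℕ) : ℝ)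
  have hk' : (0 : ℝ) < k := by exact_mod_cast hk
  have hm0 : 0 ≤ m := Nat.cast_nonneg _
  nlinarith [mul_le_mul_of_nonneg_left hsq (by linarith : (0 : ℝ) ≤ l),
    mul_le_mul_of_nonneg_left hm hm0]

end UpperBound

theorem TotallyBounded.exists_card_le_of_pairwise_le_dist {E : Type*} [PseudoMetricSpace E]
    {s : Set E} (hs : TotallyBounded s) {δ : ℝ} (hδ : 0 < δ) :
    ∃ N : ℕ, ∀ t : Finset E, ↑t ⊆ s → (t : Set E).Pairwise (fun x y => δ ≤ dist x y) →
      #t ≤ N := by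
  classical
  obtain ⟨c, hc, hcover⟩ := Metric.totallyBounded_iff.1 hs (δ / 2) (by positivity)
  refine ⟨hc.toFinset.card, fun t hts ht => ?_⟩
  have hcenter (x : E) (hx : x ∈ t) : ∃ y ∈ hc.toFinset, dist x y < δ / 2 := by
    simpa using hcover (hts hx)
  choose g hgc hgdist using hcenter
  refine card_le_card_of_injOn (fun x => if hx : x ∈ t then g x hx else x) ?_ ?_
  · intro x hx
    rw [mem_coe] at hx
    simpa [hx] using hgc x hx
  · intro x hx y hy hxy
    rw [mem_coe] at hx hy
    by_contra hne
    simp only [dif_pos hx, dif_pos hy] at hxy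
    have hy' := hgdist y hy
    rw [← hxy] at hy'
    linarith [ht hx hy hne, hgdist x hx, dist_triangle_right x y (g x hx)]

theorem exists_lt_forall_exists_le_of_compactSpace {Y ι : Type*} [TopologicalSpace Y]
    [CompactSpace Y] {s : Finset ι} {g : ι → Y → ℝ} (hg : ∀ i ∈ s, Continuous (g i)) {a : ℝ}
    (h : ∀ y, ∃ i ∈ s, a < g i y) : ∃ t, a < t ∧ ∀ y, ∃ i ∈ s, t ≤ g i y := by
  rcases isEmpty_or_nonempty Y with hY | hY
  · exact ⟨a + 1, by linarith, isEmptyElim⟩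
  obtain ⟨y₀⟩ := id hY
  have hne : s.Nonempty := let ⟨i, hi, _⟩ := h y₀; ⟨i, hi⟩
  obtain ⟨ymin, -, hmin⟩ := isCompact_univ.exists_isMinOn Set.univ_nonempty
    (Continuous.finset_sup'_apply hne hg).continuousOn
  refine ⟨s.sup' hne (g · ymin), ?_, fun y => ?_⟩
  · obtain ⟨i, hi, hlt⟩ := h ymin
    exact (lt_sup'_iff hne).2 ⟨i, hi, hlt⟩
  · obtain ⟨i, hi, hmax⟩ := exists_mem_eq_sup' hne (g · y)
    exact ⟨i, hi, hmax ▸ hmin (Set.mem_univ y)⟩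

section Kissing

variable {n : ℕ}

theorem inner_self_of_mem_sphere (u : ↥(Sphere n)) :
    ⟪(u : EuclideanSpace ℝ (Fin n)), u⟫ = 1 := by
  rw [real_inner_self_eq_norm_sq, mem_sphere_zero_iff_norm.1 u.2, one_pow]

theorem one_le_dist_of_inner_le_half {u v : ↥(Sphere n)}
    (h : ⟪(u : EuclideanSpace ℝ (Fin n)), v⟫ ≤ 1 / 2) : 1 ≤ dist u v := by
  have hsq : dist u v ^ 2 = 2 - 2 * ⟪(u : EuclideanSpace ℝ (Fin n)), v⟫ := by
    rw [Subtype.dist_eq, dist_eq_norm, norm_sub_sq_real, mem_sphere_zero_iff_norm.1 u.2,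
      mem_sphere_zero_iff_norm.1 v.2]
    ring
  nlinarith [dist_nonneg (x := u) (y := v)]

theorem sphere_nonempty (hn : 0 < n) : Nonempty ↥(Sphere n) :=
  ⟨⟨EuclideanSpace.single (⟨0, hn⟩ : Fin n) (1 : ℝ), by simp⟩⟩

def IsKissingConfiguration (X : Finset ↥(Sphere n)) : Prop :=
  ∀ u ∈ X, ∀ v ∈ X, u ≠ v → ⟪(u : EuclideanSpace ℝ (Fin n)), v⟫ ≤ 1 / 2

theorem bddAbove_kissingConfiguration_card (n : ℕ) :
    BddAbove {k | ∃ X : Finset ↥(Sphere n), IsKissingConfiguration X ∧ #X = k} := by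
  obtain ⟨N, hN⟩ := isCompact_univ.totallyBounded.exists_card_le_of_pairwise_le_dist
    (E := ↥(Sphere n)) one_pos
  refine ⟨N, ?_⟩
  rintro _ ⟨X, hX, rfl⟩
  exact hN X (Set.subset_univ _) fun u hu v hv huv =>
    one_le_dist_of_inner_le_half (hX u hu v hv huv)

theorem IsKissingConfiguration.card_le {X : Finset ↥(Sphere n)} (hX : IsKissingConfiguration X) :
    #X ≤ kissingNumber n :=
  le_csSup (bddAbove_kissingConfiguration_card n) ⟨X, hX, rfl⟩

theorem exists_isKissingConfiguration_card_eq (n : ℕ) :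
    ∃ X : Finset ↥(Sphere n), IsKissingConfiguration X ∧ #X = kissingNumber n :=
  Nat.sSup_mem (s := {k | ∃ X : Finset ↥(Sphere n), IsKissingConfiguration X ∧ #X = k})
    ⟨0, ∅, by simp [IsKissingConfiguration]⟩ (bddAbove_kissingConfiguration_card n)

theorem one_le_kissingNumber (hn : 0 < n) : 1 ≤ kissingNumber n := by
  obtain ⟨u⟩ := sphere_nonempty hn
  simpa using (show IsKissingConfiguration {u} by simp [IsKissingConfiguration]).card_le

theorem exists_half_lt_inner (q : Fin (kissingNumber n + 1) → ↥(Sphere n)) :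
    ∃ i j, i ≠ j ∧ 1 / 2 < ⟪(q i : EuclideanSpace ℝ (Fin n)), q j⟫ := by
  classical
  by_contra! hfar
  have hinj : Function.Injective q := by
    intro i j hij
    by_contra hne
    have := hfar i j hne
    rw [hij, inner_self_of_mem_sphere] at this
    norm_num at this
  have hX : IsKissingConfiguration (univ.image q) := by
    simp only [IsKissingConfiguration, mem_image, mem_univ, true_and, forall_exists_index,
      forall_apply_eq_imp_iff]
    exact fun i j hij => hfar i j fun h => hij (congrArg q h)
  have := hX.card_le
  rw [card_image_of_injective _ hinj, card_univ, Fintype.card_fin] at this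
  omega

theorem exists_inner_threshold (hn : 0 < n) :
    ∃ t, 1 / 2 < t ∧ t ≤ 1 ∧ ∀ q : Fin (kissingNumber n + 1) → ↥(Sphere n),
      ∃ i j, i ≠ j ∧ t ≤ ⟪(q i : EuclideanSpace ℝ (Fin n)), q j⟫ := by
  obtain ⟨t, ht, hclose⟩ := exists_lt_forall_exists_le_of_compactSpace
    (s := univ.offDiag) (g := fun p (q : Fin (kissingNumber n + 1) → ↥(Sphere n)) =>
      ⟪(q p.1 : EuclideanSpace ℝ (Fin n)), q p.2⟫)
    (fun p _ => by fun_prop) fun q => by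
      obtain ⟨i, j, hij, h⟩ := exists_half_lt_inner q
      exact ⟨(i, j), by simpa using hij, h⟩
  have hclose' (q : Fin (kissingNumber n + 1) → ↥(Sphere n)) :
      ∃ i j, i ≠ j ∧ t ≤ ⟪(q i : EuclideanSpace ℝ (Fin n)), q j⟫ := by
    obtain ⟨p, hp, h⟩ := hclose q
    exact ⟨p.1, p.2, (mem_offDiag.1 hp).2.2, h⟩
  obtain ⟨u⟩ := sphere_nonempty hn
  obtain ⟨-, -, -, hu⟩ := hclose' fun _ => u
  exact ⟨t, ht, inner_self_of_mem_sphere u ▸ hu, hclose'⟩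

end Kissing

section KissingBound

variable {n : ℕ}

def kissingBound (n : ℕ) (P : (↥(Sphere n) → ↥(Sphere n) → ℝ) → Prop) : EReal :=
  sInf {x : EReal | ∃ l : ℝ, x = (l : EReal) ∧
    ∃ K : ↥(Sphere n) → ↥(Sphere n) → ℝ, P K ∧
      (∀ v, K v v = l - 1) ∧
      ∀ u v : ↥(Sphere n), ⟪(u : EuclideanSpace ℝ (Fin n)), v⟫ ≤ 1 / 2 → K u v = -1}

theorem gammaSph_eq_kissingBound (n r : ℕ) : gammaSph n r = kissingBound n (memCr r) := rfl

theorem nuSph_eq_kissingBound (n r : ℕ) : nuSph n r = kissingBound n (memQr r) := rfl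

theorem kissingBound_mono {P Q : (↥(Sphere n) → ↥(Sphere n) → ℝ) → Prop}
    (h : ∀ K, P K → Q K) : kissingBound n Q ≤ kissingBound n P :=
  sInf_le_sInf fun _ ⟨l, hx, K, hK, hdiag, hfar⟩ => ⟨l, hx, K, h K hK, hdiag, hfar⟩

theorem antitone_kissingBound {P : ℕ → (↥(Sphere n) → ↥(Sphere n) → ℝ) → Prop}
    (h : ∀ r K, P r K → P (r + 1) K) : Antitone fun r => kissingBound n (P r) :=
  antitone_nat_of_succ_le fun r => kissingBound_mono (h r)

theorem kissingNumber_le_nuSph (hn : 0 < n) (r : ℕ) :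
    ((kissingNumber n : ℝ) : EReal) ≤ nuSph n r := by
  refine le_sInf ?_
  rintro _ ⟨l, rfl, K, hK, hdiag, hfar⟩
  obtain ⟨X, hX, hcard⟩ := exists_isKissingConfiguration_card_eq n
  have : Nonempty X := by
    rw [Finset.nonempty_coe_sort, ← card_pos, hcard]
    exact one_le_kissingNumber hn
  have := hK.card_le (fun u : X => (u : ↥(Sphere n))) (fun u => hdiag u)
    fun u v huv => hfar u v (hX u u.2 v v.2 (Subtype.coe_injective.ne huv))
  rw [Fintype.card_coe, hcard] at this
  exact_mod_cast this

theorem eventually_gammaSph_le (hn : 0 < n) {l : ℝ} (hl : kissingNumber n < l) :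
    ∀ᶠ r in atTop, gammaSph n r ≤ l := by
  obtain ⟨t, ht, ht1, hclose⟩ := exists_inner_threshold hn
  obtain ⟨f, hf0, hf1, hf01⟩ := exists_continuous_zero_one_of_isClosed isClosed_Iic isClosed_Ici
    (Set.Iic_disjoint_Ici.2 ht.not_ge)
  have hs : IsKernel fun u v : ↥(Sphere n) => ⟪(u : EuclideanSpace ℝ (Fin n)), v⟫ :=
    ⟨by fun_prop, fun u v => real_inner_comm _ _⟩
  filter_upwards [eventually_memCr_ramp hs f.continuous (fun x => (hf01 x).1)
    (fun x hx => (hf1 hx).ge) (one_le_kissingNumber hn) hclose hl] with r hr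
  refine sInf_le ⟨l, rfl, _, hr, fun v => ?_, fun u v huv => ?_⟩
  · simp only [inner_self_of_mem_sphere, hf1 (Set.mem_Ici.2 ht1), Pi.one_apply, mul_one]
  · simp only [hf0 (Set.mem_Iic.2 huv), Pi.zero_apply, mul_zero, zero_sub]

end KissingBound

theorem tendsto_coe_of_le_of_eventually_le {ι : Type*} {F : Filter ι} {u : ι → EReal} {a : ℝ}
    (hlow : ∀ i, (a : EReal) ≤ u i) (hup : ∀ l : ℝ, a < l → ∀ᶠ i in F, u i ≤ l) :
    Tendsto u F (𝓝 a) := by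
  refine tendsto_order.2 ⟨fun b hb => Eventually.of_forall fun i => hb.trans_le (hlow i),
    fun b hb => ?_⟩
  obtain ⟨l, hal, hlb⟩ := EReal.lt_iff_exists_real_btwn.1 hb
  exact (hup l (EReal.coe_lt_coe_iff.1 hal)).mono fun i hi => hi.trans_lt hlb

/-- the sequences `(γ_r(G_n))_r` and `(ν_r(G_n))_r` are
nonincreasing and both converge to the kissing number `κ_n`. -/
theorem stmt11 (n : ℕ) (hn : 2 ≤ n) :
    Antitone (fun r => gammaSph n r) ∧
    Tendsto (fun r => gammaSph n r) atTop
      (𝓝 ((kissingNumber n : ℝ) : EReal)) ∧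
    Antitone (fun r => nuSph n r) ∧
    Tendsto (fun r => nuSph n r) atTop
      (𝓝 ((kissingNumber n : ℝ) : EReal)) := by
  have hn : 0 < n := by omega
  have hnu_le_gamma (r : ℕ) : nuSph n r ≤ gammaSph n r := by
    rw [nuSph_eq_kissingBound, gammaSph_eq_kissingBound]
    exact kissingBound_mono fun _ => memCr.memQr
  have hlow (r : ℕ) := kissingNumber_le_nuSph hn r
  have hup (l : ℝ) (hl : (kissingNumber n : ℝ) < l) := eventually_gammaSph_le hn hl
  refine ⟨?_, ?_, ?_, ?_⟩
  · simpa only [gammaSph_eq_kissingBound] using antitone_kissingBound fun _ _ => memCr.succ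
  · exact tendsto_coe_of_le_of_eventually_le (fun r => (hlow r).trans (hnu_le_gamma r)) hup
  · simpa only [nuSph_eq_kissingBound] using antitone_kissingBound fun _ _ => memQr.succ
  · exact tendsto_coe_of_le_of_eventually_le hlow fun l hl =>
      (hup l hl).mono fun r hr => (hnu_le_gamma r).trans hr
end
end

section
/- For every n ≥ 2 there exist λ ∈ ℝ and a kernel M on S^{n-1} such that M ∈ int COP(S^{n-1}), M(x,x) = λ − 1 for all x ∈ S^{n-1}, and M(x,y) = −1 for all x, y ∈ S^{n-1} with ⟨x,y⟩ ≤ 1/2. (That is, the copositive formulation of the kissing number problem is strictly feasible.) -/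
noncomputable section

open Filter Topology RealInnerProductSpace

/-- The space of kernels on `S^{n-1}`, i.e. symmetric continuous functions on
`S^{n-1} × S^{n-1}`, with the topology of `C(S^{n-1} × S^{n-1}, ℝ)` (which is
the supremum-norm topology since the sphere is compact). -/
def SphKernelSpace (n : ℕ) : Type _ :=
  {K : C(↥(Sphere n) × ↥(Sphere n), ℝ) // ∀ x y, K (x, y) = K (y, x)}

instance (n : ℕ) : TopologicalSpace (SphKernelSpace n) :=
  instTopologicalSpaceSubtype

/-- `COP(S^{n-1})` as a subset of the space of kernels on the sphere. -/
def sphCOPSet (n : ℕ) : Set (SphKernelSpace n) :=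
  {K | IsCopositiveKernel fun x y => K.1 (x, y)}

/-! Cover the sphere by finitely many balls of radius `1/2` with centres `z ∈ T` and normalise
the bumps `x ↦ (1/2 - ‖x - z‖)₊` to a unit vector `u x ∈ ℝ^T` with nonnegative coordinates.
Then `M x y = 2|T| ⟪u x, u y⟫ - 1` has constant diagonal `2|T| - 1`, and `M x y = -1` whenever
`⟪x, y⟫ ≤ 1/2`, since then `‖x - y‖ ≥ 1` and no bump is positive at both points. For nonnegative
weights `∑ᵢⱼ ⟪u vᵢ, u vⱼ⟫ xᵢ xⱼ = ‖∑ᵢ xᵢ u vᵢ‖² ≥ (∑ᵢ xᵢ)² / |T|`, because every `u v` has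
coordinate sum at least `1`; hence `M - 1` is still copositive, so the sup-norm ball of radius `1`
around `M` lies in `COP(S^{n-1})`. -/

theorem IsCopositiveKernel.mono {X : Type*} {K L : X → X → ℝ} (hK : IsCopositiveKernel K)
    (hKL : ∀ x y, K x y ≤ L x y) : IsCopositiveKernel L := fun k v x hx =>
  (hK k v x hx).trans <| Finset.sum_le_sum fun i _ => Finset.sum_le_sum fun j _ =>
    mul_le_mul_of_nonneg_right (mul_le_mul_of_nonneg_right (hKL _ _) (hx i)) (hx j)

theorem sum_sum_inner_mul_mul_eq_norm_sq {E : Type*} [NormedAddCommGroup E]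
    [InnerProductSpace ℝ E] {k : ℕ} (w : Fin k → E) (x : Fin k → ℝ) :
    ∑ i, ∑ j, ⟪w i, w j⟫ * x i * x j = ‖∑ i, x i • w i‖ ^ 2 := by
  rw [← real_inner_self_eq_norm_sq]
  simp only [sum_inner, inner_sum, real_inner_smul_left, real_inner_smul_right]
  exact Finset.sum_congr rfl fun i _ => Finset.sum_congr rfl fun j _ => by
    rw [real_inner_comm]; ring

theorem sq_sum_le_card_mul_norm_sq_sum_smul {ι : Type*} [Fintype ι] {k : ℕ}
    (w : Fin k → EuclideanSpace ℝ ι) (hw₀ : ∀ i z, 0 ≤ w i z) (hw₁ : ∀ i, ‖w i‖ = 1)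
    (x : Fin k → ℝ) (hx : ∀ i, 0 ≤ x i) :
    (∑ i, x i) ^ 2 ≤ Fintype.card ι * ‖∑ i, x i • w i‖ ^ 2 := by
  set s : EuclideanSpace ℝ ι := ∑ i, x i • w i
  -- a unit vector with coordinates in `[0, 1]` has coordinate sum at least its squared norm `1`
  have hmass : ∀ i, 1 ≤ ∑ z, w i z := fun i => calc
    (1 : ℝ) = ∑ z, w i z ^ 2 := by rw [← EuclideanSpace.real_norm_sq_eq, hw₁, one_pow]
    _ ≤ ∑ z, w i z := Finset.sum_le_sum fun z _ => by
      have : w i z ≤ 1 := by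
        simpa [hw₁ i, Real.norm_eq_abs, abs_of_nonneg (hw₀ i z)] using PiLp.norm_apply_le (w i) z
      nlinarith [hw₀ i z]
  have hsum : ∑ i, x i ≤ ∑ z, s z := calc
    ∑ i, x i ≤ ∑ i, x i * ∑ z, w i z :=
      Finset.sum_le_sum fun i _ => le_mul_of_one_le_right (hx i) (hmass i)
    _ = ∑ z, s z := by
      simp only [s, WithLp.ofLp_sum, WithLp.ofLp_smul, Finset.sum_apply, Pi.smul_apply,
        smul_eq_mul, Finset.mul_sum]
      exact Finset.sum_comm
  calc (∑ i, x i) ^ 2 ≤ (∑ z, s z) ^ 2 :=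
        pow_le_pow_left₀ (Finset.sum_nonneg fun i _ => hx i) hsum 2
    _ ≤ Fintype.card ι * ∑ z, s z ^ 2 := by
        simpa using sq_sum_le_card_mul_sum_sq (s := Finset.univ) (f := fun z => s z)
    _ = Fintype.card ι * ‖s‖ ^ 2 := by rw [EuclideanSpace.real_norm_sq_eq]

theorem isCopositiveKernel_mul_inner_sub {X ι : Type*} [Fintype ι] (u : X → EuclideanSpace ℝ ι)
    (hu₀ : ∀ x z, 0 ≤ u x z) (hu₁ : ∀ x, ‖u x‖ = 1) {A B : ℝ} (hB : 0 ≤ B)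
    (hAB : Fintype.card ι * B ≤ A) : IsCopositiveKernel fun x y => A * ⟪u x, u y⟫ - B := by
  intro k v x hx
  have hexpand : ∑ i, ∑ j, (A * ⟪u (v i), u (v j)⟫ - B) * x i * x j =
      A * ‖∑ i, x i • u (v i)‖ ^ 2 - B * (∑ i, x i) ^ 2 := by
    rw [← sum_sum_inner_mul_mul_eq_norm_sq, sq, Finset.sum_mul_sum, Finset.mul_sum,
      Finset.mul_sum, ← Finset.sum_sub_distrib]
    refine Finset.sum_congr rfl fun i _ => ?_
    rw [Finset.mul_sum, Finset.mul_sum, ← Finset.sum_sub_distrib]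
    exact Finset.sum_congr rfl fun j _ => by ring
  have hgram := sq_sum_le_card_mul_norm_sq_sum_smul (u ∘ v) (fun i => hu₀ (v i))
    (fun i => hu₁ (v i)) x hx
  rw [hexpand, sub_nonneg]
  calc B * (∑ i, x i) ^ 2 ≤ B * (Fintype.card ι * ‖∑ i, x i • u (v i)‖ ^ 2) :=
        mul_le_mul_of_nonneg_left hgram hB
    _ = Fintype.card ι * B * ‖∑ i, x i • u (v i)‖ ^ 2 := by ring
    _ ≤ A * ‖∑ i, x i • u (v i)‖ ^ 2 := mul_le_mul_of_nonneg_right hAB (sq_nonneg _)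

theorem exists_nonneg_unit_features {X : Type*} [PseudoMetricSpace X] [CompactSpace X] {r : ℝ}
    (hr : 0 < r) : ∃ (T : Finset X) (u : X → EuclideanSpace ℝ T), Continuous u ∧
      (∀ x z, 0 ≤ u x z) ∧ (∀ x, ‖u x‖ = 1) ∧ ∀ x y, r ≤ dist x y → ⟪u x, u y⟫ = 0 := by
  obtain ⟨T, -, hTfin, hcover⟩ :=
    finite_cover_balls_of_compact (isCompact_univ (X := X)) (half_pos hr)
  lift T to Finset X using hTfin
  let φ : X → EuclideanSpace ℝ T := fun x => WithLp.toLp 2 fun z => max 0 (r / 2 - dist x z)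
  have hφ_cont : Continuous φ :=
    (PiLp.continuous_toLp 2 _).comp <| continuous_pi fun z =>
      continuous_const.max (continuous_const.sub (continuous_id.dist continuous_const))
  have hφ_ne : ∀ x, φ x ≠ 0 := by
    intro x hx
    obtain ⟨z, hz, hxz⟩ := Set.mem_iUnion₂.1 (hcover (Set.mem_univ x))
    have := congrArg (fun w : EuclideanSpace ℝ T => w ⟨z, hz⟩) hx
    simp only [φ, PiLp.zero_apply] at this
    linarith [le_max_right 0 (r / 2 - dist x z), Metric.mem_ball.1 hxz]
  refine ⟨T, fun x => ‖φ x‖⁻¹ • φ x, ?_, fun x z => ?_, fun x => ?_, fun x y hxy => ?_⟩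
  · exact ((continuous_norm.comp hφ_cont).inv₀ fun x => norm_ne_zero_iff.2 (hφ_ne x)).smul hφ_cont
  · exact mul_nonneg (inv_nonneg.2 (norm_nonneg _)) (le_max_left _ _)
  · exact norm_smul_inv_norm (hφ_ne x)
  · -- by the triangle inequality no bump is positive at both `x` and `y`
    rw [real_inner_smul_left, real_inner_smul_right, PiLp.inner_apply,
      Finset.sum_eq_zero fun z _ => ?_, mul_zero, mul_zero]
    simp only [φ, RCLike.inner_apply, conj_trivial]
    have := dist_triangle_right x y z
    rcases le_total (r / 2 - dist x z) 0 with hx | hx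
    · rw [max_eq_left hx, mul_zero]
    · rw [max_eq_left (by linarith : r / 2 - dist y z ≤ 0), zero_mul]

theorem one_le_dist_of_inner_le_half_s12 {E : Type*} [NormedAddCommGroup E] [InnerProductSpace ℝ E]
    {x y : E} (hx : ‖x‖ = 1) (hy : ‖y‖ = 1) (hxy : ⟪x, y⟫ ≤ 1 / 2) : 1 ≤ dist x y := by
  have h : 1 ≤ dist x y ^ 2 := by
    rw [dist_eq_norm, norm_sub_sq_real, hx, hy]
    linarith
  nlinarith [dist_nonneg (x := x) (y := y)]

theorem mem_interior_sphCOPSet {n : ℕ} {M : SphKernelSpace n} {ε : ℝ} (hε : 0 < ε)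
    (hM : IsCopositiveKernel fun x y => M.1 (x, y) - ε) : M ∈ interior (sphCOPSet n) := by
  refine mem_interior.2 ⟨Subtype.val ⁻¹' Metric.ball M.1 ε, ?_,
    Metric.isOpen_ball.preimage continuous_subtype_val, Metric.mem_ball_self hε⟩
  intro K hK
  refine hM.mono (L := fun x y => K.1 (x, y)) fun x y => ?_
  have := (ContinuousMap.dist_apply_le_dist (x, y)).trans_lt (Metric.mem_ball.1 hK)
  rw [Real.dist_eq] at this
  linarith [(abs_lt.1 this).1]

theorem stmt12_general (n : ℕ) :
    ∃ (l : ℝ) (M : SphKernelSpace n),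
      M ∈ interior (sphCOPSet n) ∧
      (∀ x : ↥(Sphere n), M.1 (x, x) = l - 1) ∧
      ∀ x y : ↥(Sphere n),
        ⟪(x : EuclideanSpace ℝ (Fin n)), (y : EuclideanSpace ℝ (Fin n))⟫ ≤ 1 / 2 →
        M.1 (x, y) = -1 := by
  obtain ⟨T, u, hu_cont, hu₀, hu₁, hu_far⟩ :=
    exists_nonneg_unit_features (X := ↥(Sphere n)) one_pos
  set A : ℝ := 2 * Fintype.card T
  let M : SphKernelSpace n :=
    ⟨⟨fun p => A * ⟪u p.1, u p.2⟫ - 1, by fun_prop⟩, fun x y => by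
      simp only [ContinuousMap.coe_mk, real_inner_comm]⟩
  refine ⟨A, M, mem_interior_sphCOPSet one_pos ?_, fun x => ?_, fun x y hxy => ?_⟩
  · refine (isCopositiveKernel_mul_inner_sub u hu₀ hu₁ zero_le_two le_rfl).mono fun x y => ?_
    simp only [M, A, ContinuousMap.coe_mk]
    linarith
  · simp [M, hu₁]
  · have hfar : 1 ≤ dist x y := one_le_dist_of_inner_le_half_s12
      (mem_sphere_zero_iff_norm.1 x.2) (mem_sphere_zero_iff_norm.1 y.2) hxy
    simp [M, hu_far x y hfar]

/-- the copositive formulation of the kissing number problem is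
strictly feasible: there are `λ ∈ ℝ` and a kernel `M ∈ int COP(S^{n-1})` with
`M(x,x) = λ - 1` and `M(x,y) = -1` whenever `⟪x,y⟫ ≤ 1/2`. -/
theorem stmt12 (n : ℕ) (hn : 2 ≤ n) :
    ∃ (l : ℝ) (M : SphKernelSpace n),
      M ∈ interior (sphCOPSet n) ∧
      (∀ x : ↥(Sphere n), M.1 (x, x) = l - 1) ∧
      ∀ x y : ↥(Sphere n),
        ⟪(x : EuclideanSpace ℝ (Fin n)), (y : EuclideanSpace ℝ (Fin n))⟫ ≤ 1 / 2 →
        M.1 (x, y) = -1 :=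
  stmt12_general n
end
end

section
/- For every n ≥ 2 and every r ∈ ℕ: if γ_r(G_n) < +∞ (equivalently, if there exist λ ∈ ℝ and a kernel K ∈ C_r^{S^{n-1}} with K(v,v) = λ − 1 for all v ∈ S^{n-1} and K(u,v) = −1 for all u,v with ⟨u,v⟩ ≤ 1/2), then r ≥ κ_n − 1. -/
/-!
If `K ∈ C_r` equals `-1` on every pair of distinct points of a set `s`, evaluate
`σ(Stk^r K) = σ(N)` at `r + 2` distinct points of `s`: every term of the left side sees two
distinct points, so the left side is `-1`, while the right side is `≥ 0`. Hence `|s| ≤ r + 1`,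
and kissing configurations are such sets.
-/

noncomputable section

open Filter Topology RealInnerProductSpace

theorem tsym_nonneg {α : Type*} {d : ℕ} {N : (Fin d → α) → ℝ} (hN : ∀ v, 0 ≤ N v)
    (v : Fin d → α) : 0 ≤ tsym d N v :=
  mul_nonneg (by positivity) (Finset.sum_nonneg fun _ _ => hN _)

theorem tsym_stk_kerTensor_eq_of_offDiag {α : Type*} {r : ℕ} {K : α → α → ℝ} {c : ℝ}
    {v : Fin (2 + r) → α} (hK : ∀ i j, i ≠ j → K (v i) (v j) = c) :
    tsym (2 + r) (stk 2 r (kerTensor K)) v = c := by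
  have hne : Fin.castAdd r (0 : Fin 2) ≠ Fin.castAdd r 1 := by simp [Fin.ext_iff]
  have hterm : ∀ π : Equiv.Perm (Fin (2 + r)),
      stk 2 r (kerTensor K) (v ∘ π) = c := fun π =>
    hK _ _ fun h => hne (π.injective h)
  simp only [tsym, hterm, Finset.sum_const, Finset.card_univ, Fintype.card_perm,
    Fintype.card_fin, nsmul_eq_mul, ← mul_assoc]
  rw [inv_mul_cancel₀ (by positivity), one_mul]

theorem memCr.exists_offDiag_ne_neg_one {X : Type*} [TopologicalSpace X] {r : ℕ}
    {K : X → X → ℝ} (hK : memCr r K) (v : Fin (2 + r) → X) :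
    ∃ i j, i ≠ j ∧ K (v i) (v j) ≠ -1 := by
  obtain ⟨-, N, hN, heq⟩ := hK
  by_contra! hoff
  have hneg := tsym_stk_kerTensor_eq_of_offDiag (v := v) hoff
  rw [heq] at hneg
  linarith [tsym_nonneg hN v]

theorem memCr.card_le_of_offDiag_eq_neg_one {X : Type*} [TopologicalSpace X] {r : ℕ}
    {K : X → X → ℝ} (hK : memCr r K) (s : Finset X)
    (hs : ∀ u ∈ s, ∀ v ∈ s, u ≠ v → K u v = -1) : s.card ≤ r + 1 := by
  by_contra! hcard
  let f : Fin (2 + r) ↪ s :=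
    (Fin.castLEEmb (by omega)).trans s.equivFin.symm.toEmbedding
  obtain ⟨i, j, hij, hne⟩ := hK.exists_offDiag_ne_neg_one fun i => (f i : X)
  exact hne (hs _ (f i).2 _ (f j).2 fun h => hij (f.injective (Subtype.ext h)))

theorem stmt14_general (n : ℕ) (r : ℕ)
    (hfeas : ∃ (l : ℝ) (K : ↥(Sphere n) → ↥(Sphere n) → ℝ), memCr r K ∧
      (∀ v, K v v = l - 1) ∧
      ∀ u v : ↥(Sphere n),
        ⟪(u : EuclideanSpace ℝ (Fin n)), (v : EuclideanSpace ℝ (Fin n))⟫ ≤ 1 / 2 →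
        K u v = -1) :
    kissingNumber n - 1 ≤ r := by
  obtain ⟨-, K, hK, -, hoff⟩ := hfeas
  have hkiss : kissingNumber n ≤ r + 1 := by
    refine csSup_le ⟨0, ∅, by simp, rfl⟩ ?_
    rintro k ⟨s, hs, rfl⟩
    exact hK.card_le_of_offDiag_eq_neg_one s fun u hu v hv huv =>
      hoff u v (hs u hu v hv huv)
  omega

/-- if the program defining `γ_r(G_n)` is feasible, then
`r ≥ κ_n - 1`. -/
theorem stmt14 (n : ℕ) (hn : 2 ≤ n) (r : ℕ)
    (hfeas : ∃ (l : ℝ) (K : ↥(Sphere n) → ↥(Sphere n) → ℝ), memCr r K ∧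
      (∀ v, K v v = l - 1) ∧
      ∀ u v : ↥(Sphere n),
        ⟪(u : EuclideanSpace ℝ (Fin n)), (v : EuclideanSpace ℝ (Fin n))⟫ ≤ 1 / 2 →
        K u v = -1) :
    kissingNumber n - 1 ≤ r :=
  stmt14_general n r hfeas
end
end
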